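/- Assume (h1) τ is surjective, (h2) the kernel of τ is dense in H, and (h3) ‖τφ‖_X ≤ c‖Aφ‖_H for all φ ∈ D(A). Let φ ∈ H, z ∈ ρ(A), ψ ∈ D̂(A) and Q ∈ X' be such that φ − G(z)Q ∈ D(A) and 𝓘(φ − G(z)Q) = ψ + K(z)Q in D̂(A). Then the pair (ψ, Q) is unique, and it is independent of z: if also φ − G(w)Q̃ ∈ D(A) and 𝓘(φ − G(w)Q̃) = ψ̃ + K(w)Q̃ for some w ∈ ρ(A), ψ̃ ∈ D̂(A), Q̃ ∈ X', then ψ̃ = ψ and Q̃ = Q. -/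

import Mathlib

open Complex Filter Topology
open scoped InnerProductSpace ComplexConjugate

/-!
By the resolvent identity, `G(z)ℓ - G(w)ℓ = (w - z) R(w) G(z)ℓ` lies in `D(A)`, while
`G(z)ℓ ∈ D(A)` forces `ℓ = 0`: in that case `(-A + z) G(z)ℓ` represents `ℓ ∘ τ` on `D(A)`, so
it is orthogonal to the dense set `Ker τ`, hence zero, and `ℓ = 0` because `τ` is onto.
Subtracting the two decompositions therefore gives `Q̃ = Q`.

For `ψ`, the limit defining `R̂` satisfies `R̂ (A v) = -𝓘 v` on `D(A)`, because
`R(iε) A v + v = iε R(iε) v` and `‖A (iε R(iε) v)‖ ≤ 2 |ε| ‖v‖`. Applied to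
`v = G(w)Q - G(z)Q`, for which `A v = w G(w)Q - z G(z)Q`, this identifies `𝓘 v` with the
difference of the two terms `K(z)Q` and `K(w)Q`, so `ψ̃ = ψ`.
-/

noncomputable section

namespace SingPert

/-- `R` is the (everywhere defined, bounded) resolvent `(-A + z)⁻¹` of `A` at `z`. -/
structure IsResolvent {H : Type*} [NormedAddCommGroup H] [InnerProductSpace ℂ H]
    (A : H →ₗ.[ℂ] H) (z : ℂ) (R : H →L[ℂ] H) : Prop where
  mem : ∀ ψ : H, R ψ ∈ A.domain
  left : ∀ ψ : H, -A ⟨R ψ, mem ψ⟩ + z • R ψ = ψ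
  right : ∀ φ : A.domain, R (-A φ + z • (φ : H)) = (φ : H)

theorem _root_.IsSelfAdjoint.isFormalAdjoint {H : Type*} [NormedAddCommGroup H]
    [InnerProductSpace ℂ H] [CompleteSpace H] {A : H →ₗ.[ℂ] H} (hA : IsSelfAdjoint A) :
    A.IsFormalAdjoint A := by
  simpa only [LinearPMap.isSelfAdjoint_def.mp hA] using
    LinearPMap.adjoint_isFormalAdjoint (T := A) hA.dense_domain

namespace IsResolvent

variable {H : Type*} [NormedAddCommGroup H] [InnerProductSpace ℂ H] {A : H →ₗ.[ℂ] H}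
  {z : ℂ} {R : H →L[ℂ] H}

theorem map_apply (hR : IsResolvent A z R) (φ : H) : A ⟨R φ, hR.mem φ⟩ = z • R φ - φ :=
  eq_sub_of_add_eq (neg_add_eq_iff_eq_add.mp (hR.left φ)).symm

theorem apply_eq_apply_add {u v : ℂ} {Ru Rv : H →L[ℂ] H} (hRu : IsResolvent A u Ru)
    (hRv : IsResolvent A v Rv) (ψ : H) :
    Ru ψ = Rv ψ + (v - u) • Ru (Rv ψ) := by
  have h : Ru (-A ⟨Rv ψ, hRv.mem ψ⟩ + u • Rv ψ) = Rv ψ := hRu.right _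
  have hψ : ψ = (-A ⟨Rv ψ, hRv.mem ψ⟩ + u • Rv ψ) + (v - u) • Rv ψ := by
    conv_lhs => rw [← hRv.left ψ]
    module
  calc Ru ψ = Ru ((-A ⟨Rv ψ, hRv.mem ψ⟩ + u • Rv ψ) + (v - u) • Rv ψ) := congrArg Ru hψ
    _ = Rv ψ + (v - u) • Ru (Rv ψ) := by rw [map_add, map_smul, h]

theorem inner_apply_conj (hsym : A.IsFormalAdjoint A) {R' : H →L[ℂ] H}
    (hR : IsResolvent A z R) (hR' : IsResolvent A (conj z) R') (x ψ : H) :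
    ⟪x, R' ψ⟫_ℂ = ⟪R x, ψ⟫_ℂ := by
  conv_lhs => rw [← hR.left x]
  conv_rhs => rw [← hR'.left ψ]
  rw [inner_add_left, inner_neg_left, inner_smul_left, inner_add_right, inner_neg_right,
    inner_smul_right]
  linear_combination -hsym ⟨R x, hR.mem x⟩ ⟨R' ψ, hR'.mem ψ⟩

theorem abs_im_mul_norm_le (hsym : A.IsFormalAdjoint A) (hR : IsResolvent A z R) (ψ : H) :
    |z.im| * ‖R ψ‖ ≤ ‖ψ‖ := by
  have hreal : (⟪R ψ, A ⟨R ψ, hR.mem ψ⟩⟫_ℂ).im = 0 := Complex.conj_eq_iff_im.mp <|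
    (inner_conj_symm _ _).trans (hsym ⟨R ψ, hR.mem ψ⟩ ⟨R ψ, hR.mem ψ⟩)
  have him : (⟪R ψ, ψ⟫_ℂ).im = z.im * ‖R ψ‖ ^ 2 := by
    rw [show ⟪R ψ, ψ⟫_ℂ = ⟪R ψ, -A ⟨R ψ, hR.mem ψ⟩ + z • R ψ⟫_ℂ by rw [hR.left ψ],
      inner_add_right, inner_neg_right, inner_smul_right, inner_self_eq_norm_sq_to_K]
    simp [hreal, ← Complex.ofReal_pow]
  have hsq : |z.im| * ‖R ψ‖ * ‖R ψ‖ ≤ ‖ψ‖ * ‖R ψ‖ :=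
    calc |z.im| * ‖R ψ‖ * ‖R ψ‖ = |(⟪R ψ, ψ⟫_ℂ).im| := by
          rw [him, abs_mul, abs_of_nonneg (sq_nonneg ‖R ψ‖)]; ring
      _ ≤ ‖⟪R ψ, ψ⟫_ℂ‖ := Complex.abs_im_le_norm _
      _ ≤ ‖ψ‖ * ‖R ψ‖ := (norm_inner_le_norm _ _).trans_eq (mul_comm _ _)
  rcases (norm_nonneg (R ψ)).eq_or_lt with hRψ | hRψ
  · rw [← hRψ, mul_zero]
    exact norm_nonneg ψ
  · exact le_of_mul_le_mul_right hsq hRψ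

theorem apply_map (hR : IsResolvent A z R) (v : A.domain) : R (A v) = z • R v - v := by
  have h := hR.right v
  rw [map_add, map_neg, map_smul] at h
  linear_combination (norm := module) -h

theorem norm_map_apply_add_le (hsym : A.IsFormalAdjoint A) {e : ℝ}
    (hR : IsResolvent A (I * e) R) (v : A.domain) :
    ‖A (⟨R (A v), hR.mem _⟩ + v)‖ ≤ 2 * |e| * ‖(v : H)‖ := by
  have hv : (⟨R (A v), hR.mem _⟩ + v : A.domain) = (I * e) • ⟨R v, hR.mem v⟩ :=
    Subtype.ext (by simp [hR.apply_map v])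
  have hbound : |e| * ‖R v‖ ≤ ‖(v : H)‖ := by
    simpa using hR.abs_im_mul_norm_le hsym v
  have hnorm : ‖I * (e : ℂ)‖ = |e| := by simp
  rw [hv, LinearPMap.map_smul, hR.map_apply, norm_smul, hnorm]
  calc |e| * ‖(I * e) • R v - v‖ ≤ |e| * (|e| * ‖R v‖ + ‖(v : H)‖) := by
        gcongr
        exact (norm_sub_le _ _).trans_eq (by rw [norm_smul, hnorm])
    _ ≤ |e| * (‖(v : H)‖ + ‖(v : H)‖) := by gcongr
    _ = 2 * |e| * ‖(v : H)‖ := by ring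

end IsResolvent

theorem tendsto_iota_resolvent_map {H : Type*} [NormedAddCommGroup H] [InnerProductSpace ℂ H]
    {A : H →ₗ.[ℂ] H} (hsym : A.IsFormalAdjoint A) {D : Type*} [NormedAddCommGroup D]
    [NormedSpace ℂ D] (iota : A.domain →ₗ[ℂ] D) (hiso : ∀ φ : A.domain, ‖iota φ‖ = ‖A φ‖)
    {ε : ℕ → ℝ} (hεlim : Tendsto ε atTop (𝓝 0)) {Rn : ℕ → H →L[ℂ] H}
    (hRn : ∀ n, IsResolvent A (I * (ε n : ℂ)) (Rn n)) (v : A.domain) :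
    Tendsto (fun n => iota ⟨Rn n (A v), (hRn n).mem _⟩) atTop (𝓝 (-iota v)) := by
  rw [tendsto_iff_norm_sub_tendsto_zero]
  have hbound : Tendsto (fun n => 2 * |ε n| * ‖(v : H)‖) atTop (𝓝 0) := by
    simpa using ((hεlim.abs.const_mul 2).mul_const ‖(v : H)‖)
  refine squeeze_zero (fun n => norm_nonneg _) (fun n => ?_) hbound
  rw [sub_neg_eq_add, ← map_add, hiso]
  exact (hRn n).norm_map_apply_add_le hsym v

section Green

variable {H : Type*} [NormedAddCommGroup H] [InnerProductSpace ℂ H] {A : H →ₗ.[ℂ] H}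
  {X : Type*} [NormedAddCommGroup X] [NormedSpace ℂ X] {τ : A.domain →ₗ[ℂ] X}
  {z w : ℂ} {Rw Rzbar Rwbar : H →L[ℂ] H} {Gz Gw : StrongDual ℂ X →SL[starRingEnd ℂ] H}

theorem G_sub_G_eq_smul_resolvent (hsym : A.IsFormalAdjoint A) (hRw : IsResolvent A w Rw)
    (hRzbar : IsResolvent A (conj z) Rzbar) (hRwbar : IsResolvent A (conj w) Rwbar)
    (hGz : ∀ (ℓ : StrongDual ℂ X) (ψ : H), ⟪Gz ℓ, ψ⟫_ℂ = ℓ (τ ⟨Rzbar ψ, hRzbar.mem ψ⟩))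
    (hGw : ∀ (ℓ : StrongDual ℂ X) (ψ : H), ⟪Gw ℓ, ψ⟫_ℂ = ℓ (τ ⟨Rwbar ψ, hRwbar.mem ψ⟩))
    (ℓ : StrongDual ℂ X) :
    Gz ℓ - Gw ℓ = (w - z) • Rw (Gz ℓ) := by
  refine ext_inner_right ℂ fun ψ => ?_
  have hresolvent : (⟨Rzbar ψ, hRzbar.mem ψ⟩ : A.domain) = ⟨Rwbar ψ, hRwbar.mem ψ⟩
      + (conj w - conj z) • ⟨Rzbar (Rwbar ψ), hRzbar.mem _⟩ :=
    Subtype.ext (hRzbar.apply_eq_apply_add hRwbar ψ)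
  rw [inner_sub_left, hGz, hGw, hresolvent, map_add, map_smul, map_add, map_smul, smul_eq_mul,
    ← hGz, hRw.inner_apply_conj hsym hRwbar, inner_smul_left, map_sub]
  ring

theorem eq_zero_of_G_mem_domain (hsym : A.IsFormalAdjoint A) (hτ : Function.Surjective τ)
    (hker : Dense ((fun φ : A.domain => (φ : H)) '' {φ : A.domain | τ φ = 0}))
    (hRzbar : IsResolvent A (conj z) Rzbar)
    (hGz : ∀ (ℓ : StrongDual ℂ X) (ψ : H), ⟪Gz ℓ, ψ⟫_ℂ = ℓ (τ ⟨Rzbar ψ, hRzbar.mem ψ⟩))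
    {ℓ : StrongDual ℂ X} (hℓ : Gz ℓ ∈ A.domain) : ℓ = 0 := by
  set u : A.domain := ⟨Gz ℓ, hℓ⟩
  have hrepr : ∀ g : A.domain, ⟪-A u + z • (u : H), g⟫_ℂ = ℓ (τ g) := fun g => by
    have hg : (⟨Rzbar (-A g + conj z • (g : H)), hRzbar.mem _⟩ : A.domain) = g :=
      Subtype.ext (hRzbar.right g)
    have hadj : ⟪-A u + z • (u : H), g⟫_ℂ = ⟪Gz ℓ, -A g + conj z • (g : H)⟫_ℂ := by
      rw [inner_add_left, inner_neg_left, inner_smul_left, inner_add_right, inner_neg_right,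
        inner_smul_right, hsym u g]
    rw [hadj, hGz, hg]
  have hzero : -A u + z • (u : H) = 0 := hker.eq_zero_of_inner_left ℂ <| by
    rintro _ ⟨g, hg, rfl⟩
    rw [hrepr, show τ g = 0 from hg, map_zero]
  ext x
  obtain ⟨g, rfl⟩ := hτ x
  rw [← hrepr, hzero, inner_zero_left, zero_apply]

theorem exists_domain_eq_G_sub_G (hsym : A.IsFormalAdjoint A) (hRw : IsResolvent A w Rw)
    (hRzbar : IsResolvent A (conj z) Rzbar) (hRwbar : IsResolvent A (conj w) Rwbar)
    (hGz : ∀ (ℓ : StrongDual ℂ X) (ψ : H), ⟪Gz ℓ, ψ⟫_ℂ = ℓ (τ ⟨Rzbar ψ, hRzbar.mem ψ⟩))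
    (hGw : ∀ (ℓ : StrongDual ℂ X) (ψ : H), ⟪Gw ℓ, ψ⟫_ℂ = ℓ (τ ⟨Rwbar ψ, hRwbar.mem ψ⟩))
    (ℓ : StrongDual ℂ X) :
    ∃ v : A.domain, (v : H) = Gw ℓ - Gz ℓ ∧ A v = w • Gw ℓ - z • Gz ℓ := by
  have hG := G_sub_G_eq_smul_resolvent hsym hRw hRzbar hRwbar hGz hGw ℓ
  refine ⟨(z - w) • ⟨Rw (Gz ℓ), hRw.mem _⟩, ?_, ?_⟩
  · change (z - w) • Rw (Gz ℓ) = _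
    linear_combination (norm := module) hG
  · rw [LinearPMap.map_smul, hRw.map_apply]
    linear_combination (norm := module) w • hG

theorem eq_of_G_sub_G_mem_domain (hsym : A.IsFormalAdjoint A) (hτ : Function.Surjective τ)
    (hker : Dense ((fun φ : A.domain => (φ : H)) '' {φ : A.domain | τ φ = 0}))
    (hRw : IsResolvent A w Rw)
    (hRzbar : IsResolvent A (conj z) Rzbar) (hRwbar : IsResolvent A (conj w) Rwbar)
    (hGz : ∀ (ℓ : StrongDual ℂ X) (ψ : H), ⟪Gz ℓ, ψ⟫_ℂ = ℓ (τ ⟨Rzbar ψ, hRzbar.mem ψ⟩))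
    (hGw : ∀ (ℓ : StrongDual ℂ X) (ψ : H), ⟪Gw ℓ, ψ⟫_ℂ = ℓ (τ ⟨Rwbar ψ, hRwbar.mem ψ⟩))
    {ℓ ℓ' : StrongDual ℂ X} (h : Gz ℓ - Gw ℓ' ∈ A.domain) : ℓ = ℓ' := by
  obtain ⟨v, hv, -⟩ := exists_domain_eq_G_sub_G hsym hRw hRzbar hRwbar hGz hGw ℓ'
  have hmem : Gz (ℓ - ℓ') ∈ A.domain := by
    have := add_mem h v.2
    rwa [hv, sub_add_sub_cancel, ← map_sub] at this
  exact sub_eq_zero.mp (eq_zero_of_G_mem_domain hsym hτ hker hRzbar hGz hmem)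

end Green

theorem decomposition_unique_general
    {H : Type*} [NormedAddCommGroup H] [InnerProductSpace ℂ H] [CompleteSpace H]
    {X : Type*} [NormedAddCommGroup X] [NormedSpace ℂ X]
    (A : H →ₗ.[ℂ] H) (hA : IsSelfAdjoint A)
    (τ : A.domain →ₗ[ℂ] X)
    -- (h1), (h2), (h3)
    (hτsurj : Function.Surjective τ)
    (hker : Dense ((fun φ : A.domain => (φ : H)) '' {φ : A.domain | τ φ = 0}))
    -- the completion `D̂(A)` of `D(A)` w.r.t. the norm `‖φ‖_(A) = ‖Aφ‖`
    {Dhat : Type*} [NormedAddCommGroup Dhat] [NormedSpace ℂ Dhat]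
    (iota : A.domain →ₗ[ℂ] Dhat)
    (hiso : ∀ φ : A.domain, ‖iota φ‖ = ‖A φ‖)
    -- a sequence of nonzero reals converging to `0`, with the associated resolvents
    (ε : ℕ → ℝ) (hεlim : Filter.Tendsto ε Filter.atTop (nhds 0))
    (Rn : ℕ → H →L[ℂ] H) (hRn : ∀ n, IsResolvent A (Complex.I * (ε n : ℂ)) (Rn n))
    -- `Rhat φ = lim 𝓘 (R(iεₙ) φ)`
    (Rhat : H →L[ℂ] Dhat)
    (hRhat : ∀ φ : H, Filter.Tendsto (fun n => iota ⟨Rn n φ, (hRn n).mem φ⟩)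
      Filter.atTop (nhds (Rhat φ)))
    -- points `z, w ∈ ρ(A)` and the maps `G(z)`, `G(w)`
    (z w : ℂ) (Rzbar Rw Rwbar : H →L[ℂ] H)
    (hRzbar : IsResolvent A (starRingEnd ℂ z) Rzbar)
    (hRw : IsResolvent A w Rw) (hRwbar : IsResolvent A (starRingEnd ℂ w) Rwbar)
    (Gz Gw : StrongDual ℂ X →SL[starRingEnd ℂ] H)
    (hGz : ∀ (ℓ : StrongDual ℂ X) (ψ : H),
      ⟪Gz ℓ, ψ⟫_ℂ = ℓ (τ ⟨Rzbar ψ, hRzbar.mem ψ⟩))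
    (hGw : ∀ (ℓ : StrongDual ℂ X) (ψ : H),
      ⟪Gw ℓ, ψ⟫_ℂ = ℓ (τ ⟨Rwbar ψ, hRwbar.mem ψ⟩))
    -- two decompositions of the same `φ`, at `z` and at `w`
    (φ : H) (ψ ψ' : Dhat) (Q Q' : StrongDual ℂ X)
    (hmem : φ - Gz Q ∈ A.domain)
    (hdec : iota ⟨φ - Gz Q, hmem⟩ = ψ + z • Rhat (Gz Q))
    (hmem' : φ - Gw Q' ∈ A.domain)
    (hdec' : iota ⟨φ - Gw Q', hmem'⟩ = ψ' + w • Rhat (Gw Q')) :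
    ψ' = ψ ∧ Q' = Q := by
  have hsym := hA.isFormalAdjoint
  obtain rfl : Q' = Q := by
    have h := sub_mem hmem' hmem
    rw [sub_sub_sub_cancel_left] at h
    exact (eq_of_G_sub_G_mem_domain hsym hτsurj hker hRw hRzbar hRwbar hGz hGw h).symm
  obtain ⟨v, hv, hAv⟩ := exists_domain_eq_G_sub_G hsym hRw hRzbar hRwbar hGz hGw Q'
  have hRhat_map : Rhat (A v) = -iota v :=
    tendsto_nhds_unique (hRhat _) (tendsto_iota_resolvent_map hsym iota hiso hεlim hRn v)
  have hdiff : (⟨φ - Gz Q', hmem⟩ : A.domain) - ⟨φ - Gw Q', hmem'⟩ = v :=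
    Subtype.ext (by simp [hv])
  have hiota : iota v = z • Rhat (Gz Q') - w • Rhat (Gw Q') := by
    rw [← neg_neg (iota v), ← hRhat_map, hAv, map_sub, map_smul, map_smul, neg_sub]
  rw [← hdiff, map_sub, hdec, hdec'] at hiota
  exact ⟨by linear_combination (norm := module) -hiota, rfl⟩

/-- Assume (h1) `τ` surjective, (h2) `Ker τ` dense in `H`, (h3)
`‖τφ‖ ≤ c ‖Aφ‖`.  If `φ ∈ H`, `z ∈ ρ(A)`, `ψ ∈ D̂(A)` and `Q ∈ X'` are such that
`φ − G(z)Q ∈ D(A)` and `𝓘(φ − G(z)Q) = ψ + K(z)Q`, then the pair `(ψ, Q)` is unique and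
independent of `z`.  Here `K(z)ℓ = z • Rhat (G(z)ℓ)`. -/
theorem decomposition_unique
    {H : Type*} [NormedAddCommGroup H] [InnerProductSpace ℂ H] [CompleteSpace H]
    {X : Type*} [NormedAddCommGroup X] [NormedSpace ℂ X] [CompleteSpace X]
    (A : H →ₗ.[ℂ] H) (hA : IsSelfAdjoint A)
    (hinj : ∀ φ : A.domain, A φ = 0 → (φ : H) = 0)
    (τ : A.domain →ₗ[ℂ] X)
    -- (h1), (h2), (h3)
    (hτsurj : Function.Surjective τ)
    (hker : Dense ((fun φ : A.domain => (φ : H)) '' {φ : A.domain | τ φ = 0}))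
    (hτbdd : ∃ c : ℝ, ∀ φ : A.domain, ‖τ φ‖ ≤ c * ‖A φ‖)
    -- the completion `D̂(A)` of `D(A)` w.r.t. the norm `‖φ‖_(A) = ‖Aφ‖`
    {Dhat : Type*} [NormedAddCommGroup Dhat] [NormedSpace ℂ Dhat] [CompleteSpace Dhat]
    (iota : A.domain →ₗ[ℂ] Dhat)
    (hiso : ∀ φ : A.domain, ‖iota φ‖ = ‖A φ‖)
    (hdense : DenseRange iota)
    -- a sequence of nonzero reals converging to `0`, with the associated resolvents
    (ε : ℕ → ℝ) (hε0 : ∀ n, ε n ≠ 0) (hεlim : Filter.Tendsto ε Filter.atTop (nhds 0))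
    (Rn : ℕ → H →L[ℂ] H) (hRn : ∀ n, IsResolvent A (Complex.I * (ε n : ℂ)) (Rn n))
    -- `Rhat φ = lim 𝓘 (R(iεₙ) φ)`
    (Rhat : H →L[ℂ] Dhat)
    (hRhat : ∀ φ : H, Filter.Tendsto (fun n => iota ⟨Rn n φ, (hRn n).mem φ⟩)
      Filter.atTop (nhds (Rhat φ)))
    -- points `z, w ∈ ρ(A)` and the maps `G(z)`, `G(w)`
    (z w : ℂ) (Rz Rzbar Rw Rwbar : H →L[ℂ] H)
    (hRz : IsResolvent A z Rz) (hRzbar : IsResolvent A (starRingEnd ℂ z) Rzbar)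
    (hRw : IsResolvent A w Rw) (hRwbar : IsResolvent A (starRingEnd ℂ w) Rwbar)
    (Gz Gw : StrongDual ℂ X →SL[starRingEnd ℂ] H)
    (hGz : ∀ (ℓ : StrongDual ℂ X) (ψ : H),
      ⟪Gz ℓ, ψ⟫_ℂ = ℓ (τ ⟨Rzbar ψ, hRzbar.mem ψ⟩))
    (hGw : ∀ (ℓ : StrongDual ℂ X) (ψ : H),
      ⟪Gw ℓ, ψ⟫_ℂ = ℓ (τ ⟨Rwbar ψ, hRwbar.mem ψ⟩))
    -- two decompositions of the same `φ`, at `z` and at `w`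
    (φ : H) (ψ ψ' : Dhat) (Q Q' : StrongDual ℂ X)
    (hmem : φ - Gz Q ∈ A.domain)
    (hdec : iota ⟨φ - Gz Q, hmem⟩ = ψ + z • Rhat (Gz Q))
    (hmem' : φ - Gw Q' ∈ A.domain)
    (hdec' : iota ⟨φ - Gw Q', hmem'⟩ = ψ' + w • Rhat (Gw Q')) :
    ψ' = ψ ∧ Q' = Q :=
  decomposition_unique_general A hA τ hτsurj hker iota hiso ε hεlim Rn hRn Rhat hRhat z w Rzbar Rw
    Rwbar hRzbar hRw hRwbar Gz Gw hGz hGw φ ψ ψ' Q Q' hmem hdec hmem' hdec'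

end SingPert
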